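/- Let G be a group and let f be a cover-submultiplicative function on the finite-index subgroups of G. Suppose there is a real number α > 0 such that α · [G:K] ≤ f(K) for every finite-index subgroup K of G. Let H and H′ be finite-index subgroups of G and suppose there is a group isomorphism φ : H → H′ such that for every finite-index subgroup K of G with K ≤ H, the image φ(K) (viewed as a subgroup of G via H′ ≤ G) satisfies f(φ(K)) = f(K). Then [G:H] = [G:H′]. -/

import Mathlib

/-!
Write `c(J) = inf { f K / [J:K] }` over finite-index `K ≤ J`. Cover-submultiplicativity makes
`f K / [G:K]` monotone in `K`, and `K ⊓ J` is cofinal among finite-index subgroups, so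
`c(J) = [G:J] · δ` with `δ = inf_K f K / [G:K] ≥ α > 0`. Parametrising the `K ≤ J` by
subgroups of `J` shows that `c` only depends on `J` as an abstract group together with `f`, so an
`f`-preserving isomorphism `H ≃* H'` gives `c(H) = c(H')`, whence `[G:H] = [G:H']`.
-/

/-- A function `f` assigning to each finite-index subgroup of `G` a nonnegative real number
is *cover-submultiplicative* if `f K ≤ [K':K] * f K'` whenever `K ≤ K'` are finite-index
subgroups of `G`. -/
def CoverSubmultiplicative {G : Type*} [Group G] (f : Subgroup G → ℝ) : Prop :=
  (∀ K : Subgroup G, K.index ≠ 0 → 0 ≤ f K) ∧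
    ∀ K K' : Subgroup G, K.index ≠ 0 → K'.index ≠ 0 → K ≤ K' →
      f K ≤ (K.relIndex K' : ℝ) * f K'

namespace CoverSubmultiplicative

variable {G : Type*} [Group G] {f : Subgroup G → ℝ}

/-- The values `f K / [J:K]` for `K ≤ J` of finite index in `J`, with `K` written as the image
of `L : Subgroup J`. -/
def normalizedValues (f : Subgroup G → ℝ) (J : Subgroup G) : Set ℝ :=
  (fun L : Subgroup J => f (L.map J.subtype) / L.index) '' {L | L.index ≠ 0}

noncomputable def normalizedInvariant (f : Subgroup G → ℝ) (J : Subgroup G) : ℝ :=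
  sInf (normalizedValues f J)

def densities (f : Subgroup G → ℝ) : Set ℝ :=
  (fun K : Subgroup G => f K / K.index) '' {K | K.index ≠ 0}

noncomputable def infDensity (f : Subgroup G → ℝ) : ℝ :=
  sInf (densities f)

theorem div_index_le_div_index (hf : CoverSubmultiplicative f) {K K' : Subgroup G}
    (hK : K.index ≠ 0) (hKK' : K ≤ K') : f K / K.index ≤ f K' / K'.index := by
  have hK' : K'.index ≠ 0 := ne_zero_of_dvd_ne_zero hK (Subgroup.index_dvd_of_le hKK')
  rw [div_le_div_iff₀ (Nat.cast_pos.2 (Nat.pos_of_ne_zero hK))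
    (Nat.cast_pos.2 (Nat.pos_of_ne_zero hK'))]
  calc f K * K'.index ≤ K.relIndex K' * f K' * K'.index := by
        gcongr; exact hf.2 K K' hK hK' hKK'
    _ = f K' * K.index := by
        rw [← Subgroup.relIndex_mul_index hKK']; push_cast; ring

theorem infDensity_le (hf : CoverSubmultiplicative f) {K : Subgroup G} (hK : K.index ≠ 0) :
    infDensity f ≤ f K / K.index := by
  refine csInf_le ⟨0, ?_⟩ ⟨K, hK, rfl⟩
  rintro _ ⟨K, hK, rfl⟩
  exact div_nonneg (hf.1 K hK) K.index.cast_nonneg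

theorem le_infDensity {α : ℝ}
    (hlow : ∀ K : Subgroup G, K.index ≠ 0 → α * K.index ≤ f K) : α ≤ infDensity f := by
  refine le_csInf ⟨_, ⊤, by simp, rfl⟩ ?_
  rintro _ ⟨K, hK, rfl⟩
  exact (le_div_iff₀ (Nat.cast_pos.2 (Nat.pos_of_ne_zero hK))).2 (hlow K hK)

theorem index_map_subtype_ne_zero {J : Subgroup G} (hJ : J.index ≠ 0) {L : Subgroup J}
    (hL : L.index ≠ 0) : (L.map J.subtype).index ≠ 0 := by
  rw [Subgroup.index_map_subtype]
  exact mul_ne_zero hL hJ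

theorem div_index_eq_index_mul {J : Subgroup G} (hJ : J.index ≠ 0) (L : Subgroup J) :
    f (L.map J.subtype) / L.index =
      J.index * (f (L.map J.subtype) / (L.map J.subtype).index) := by
  have hJ' : (J.index : ℝ) ≠ 0 := Nat.cast_ne_zero.2 hJ
  rw [Subgroup.index_map_subtype, Nat.cast_mul]
  field_simp

theorem normalizedInvariant_eq_index_mul_infDensity (hf : CoverSubmultiplicative f)
    {J : Subgroup G} (hJ : J.index ≠ 0) :
    normalizedInvariant f J = J.index * infDensity f := by
  have hJpos : (0 : ℝ) < J.index := Nat.cast_pos.2 (Nat.pos_of_ne_zero hJ)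
  apply le_antisymm
  · rw [← div_le_iff₀' hJpos]
    refine le_csInf ⟨_, ⊤, by simp, rfl⟩ ?_
    rintro _ ⟨K, hK, rfl⟩
    have hKJ : (K.subgroupOf J).index ≠ 0 := mt Subgroup.index_eq_zero_of_relIndex_eq_zero hK
    have hbdd : BddBelow (normalizedValues f J) := by
      refine ⟨0, ?_⟩
      rintro _ ⟨L, hL, rfl⟩
      exact div_nonneg (hf.1 _ (index_map_subtype_ne_zero hJ hL)) L.index.cast_nonneg
    rw [div_le_iff₀' hJpos]
    calc normalizedInvariant f J ≤ f ((K.subgroupOf J).map J.subtype) / (K.subgroupOf J).index :=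
          csInf_le hbdd ⟨_, hKJ, rfl⟩
      _ = J.index * (f (K ⊓ J) / (K ⊓ J).index) := by
          rw [div_index_eq_index_mul hJ, Subgroup.subgroupOf_map_subtype]
      _ ≤ J.index * (f K / K.index) :=
          mul_le_mul_of_nonneg_left
            (div_index_le_div_index hf (Subgroup.index_inf_ne_zero hK hJ) inf_le_left) hJpos.le
  · refine le_csInf ⟨_, ⊤, by simp, rfl⟩ ?_
    rintro _ ⟨L, hL, rfl⟩
    dsimp only
    rw [div_index_eq_index_mul hJ]
    exact mul_le_mul_of_nonneg_left (infDensity_le hf (index_map_subtype_ne_zero hJ hL)) hJpos.le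

theorem normalizedInvariant_eq_of_mulEquiv {H H' : Subgroup G} (hH : H.index ≠ 0)
    (φ : H ≃* H')
    (hφ : ∀ K : Subgroup G, K.index ≠ 0 → K ≤ H →
      f (Subgroup.map H'.subtype (Subgroup.map φ.toMonoidHom (K.subgroupOf H))) = f K) :
    normalizedInvariant f H' = normalizedInvariant f H := by
  suffices normalizedValues f H' = normalizedValues f H by
    rw [normalizedInvariant, normalizedInvariant, this]
  have hidx : {L' : Subgroup H' | L'.index ≠ 0} = φ.mapSubgroup '' {L | L.index ≠ 0} := by
    rw [φ.mapSubgroup.image_eq_preimage_symm]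
    ext L'
    show L'.index ≠ 0 ↔ (L'.map φ.symm.toMonoidHom).index ≠ 0
    rw [Subgroup.index_map_of_bijective φ.symm.bijective]
  rw [normalizedValues, hidx, Set.image_image]
  refine Set.image_congr fun L hL => ?_
  have hK : (L.map H.subtype).subgroupOf H = L :=
    Subgroup.comap_map_eq_self_of_injective H.subtype_injective L
  have := hφ (L.map H.subtype) (index_map_subtype_ne_zero hH hL)
    (Subgroup.map_subtype_le L)
  rw [hK] at this
  simp only [MulEquiv.coe_mapSubgroup, this]
  rw [Subgroup.index_map_of_bijective φ.bijective]

end CoverSubmultiplicative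

/-- If `f` is cover-submultiplicative, linearly bounded below by `α * [G:K]` with `α > 0`,
and `H ≅ H'` are finite-index subgroups via an isomorphism `φ` preserving `f` on
finite-index subgroups `K ≤ H`, then `[G:H] = [G:H']`. -/
theorem stmt_2 {G : Type*} [Group G] (f : Subgroup G → ℝ)
    (hf : CoverSubmultiplicative f)
    (α : ℝ) (hα : 0 < α)
    (hlow : ∀ K : Subgroup G, K.index ≠ 0 → α * (K.index : ℝ) ≤ f K)
    (H H' : Subgroup G) (hH : H.index ≠ 0) (hH' : H'.index ≠ 0)
    (φ : H ≃* H')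
    (hφ : ∀ K : Subgroup G, K.index ≠ 0 → K ≤ H →
      f (Subgroup.map H'.subtype (Subgroup.map φ.toMonoidHom (K.subgroupOf H))) = f K) :
    H.index = H'.index := by
  open CoverSubmultiplicative in
  have hδ : infDensity f ≠ 0 := (hα.trans_le (le_infDensity hlow)).ne'
  have hc := hf.normalizedInvariant_eq_index_mul_infDensity hH
  rw [← normalizedInvariant_eq_of_mulEquiv hH φ hφ,
    hf.normalizedInvariant_eq_index_mul_infDensity hH'] at hc
  exact_mod_cast (mul_right_cancel₀ hδ hc).symm
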